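/- Fix integers n ≥ 1 and M ≥ 1, and for k ∈ ℤ let i_k be the unique element of {0,1,…,n} with i_k ≡ −k (mod n+1). Let u = (u_1,…,u_{n+1}) ∈ B_M and let c_1,…,c_n be nonnegative integers satisfying u_{n+2−k} + u_{n+3−k} + ⋯ + u_{n+1} ≥ c_1 + c_2 + ⋯ + c_k for every 1 ≤ k ≤ n. Define u^⟨0⟩ = u and u^⟨k⟩ = ẽ_{i_k}^{ε_{i_k}(u^⟨k−1⟩) − c_k} u^⟨k−1⟩ for 1 ≤ k ≤ n. Then all u^⟨k⟩ are well defined, and for 1 ≤ k ≤ n: (i) φ_{i_k}(u^⟨k−1⟩) = u_{n+1−k}; (ii) ε_{i_k}(u^⟨k⟩) = c_k; (iii) t(σ u^⟨n⟩) = (c_1, c_2, …, c_n), where σ(x_1,…,x_{n+1}) = (x_2,…,x_{n+1},x_1) and t(x_1,…,x_{n+1}) = (x_n, x_{n−1},…,x_1). -/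
import Mathlib


/-- Iterated application of a partial map: `OptIter g m a` is `g^m a`. -/
def OptIter {α : Type} (g : α → Option α) : ℕ → α → Option α
  | 0, a => some a
  | m + 1, a => (g a).bind (OptIter g m)

/-- Apply the partial maps `g 1`, `g 2`, ..., `g m` in this order. -/
def ChainOpt {α : Type} (g : ℕ → α → Option α) (m : ℕ) (a : α) : Option α :=
  (List.range m).foldl (fun acc j => acc.bind (g (j + 1))) (some a)

/-- A set with partial Kashiwara-type operators indexed by `{0, 1, ..., n}`. -/
structure PreCrystal (n : ℕ) where
  carrier : Type
  e : Fin (n + 1) → carrier → Option carrier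
  f : Fin (n + 1) → carrier → Option carrier

namespace PreCrystal

variable {n : ℕ}

/-- `ε_i(b) = max {m ≥ 0 : ẽ_i^m b is defined}`. -/
noncomputable def eps (C : PreCrystal n) (i : Fin (n + 1)) (b : C.carrier) : ℕ :=
  sSup {m | OptIter (C.e i) m b ≠ none}

/-- `φ_i(b) = max {m ≥ 0 : f̃_i^m b is defined}`. -/
noncomputable def phi (C : PreCrystal n) (i : Fin (n + 1)) (b : C.carrier) : ℕ :=
  sSup {m | OptIter (C.f i) m b ≠ none}

/-- `ẽ_i^max b = ẽ_i^{ε_i(b)} b`. -/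
noncomputable def eMax (C : PreCrystal n) (i : Fin (n + 1)) (b : C.carrier) : Option C.carrier :=
  OptIter (C.e i) (C.eps i b) b

/-- The Weyl group operator `S_i`: `f̃_i^{φ_i(b)-ε_i(b)} b` if `φ_i(b) ≥ ε_i(b)`,
and `ẽ_i^{ε_i(b)-φ_i(b)} b` if `φ_i(b) ≤ ε_i(b)`. -/
noncomputable def S (C : PreCrystal n) (i : Fin (n + 1)) (b : C.carrier) : Option C.carrier :=
  if C.eps i b ≤ C.phi i b then OptIter (C.f i) (C.phi i b - C.eps i b) b
  else OptIter (C.e i) (C.eps i b - C.phi i b) b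

/-- The tensor product `C ⊗ D` of two crystals, with the Kashiwara tensor product rule. -/
noncomputable def tensor (C D : PreCrystal n) : PreCrystal n where
  carrier := C.carrier × D.carrier
  e := fun i p =>
    if D.eps i p.2 ≤ C.phi i p.1 then (C.e i p.1).map (fun b => (b, p.2))
    else (D.e i p.2).map (fun b => (p.1, b))
  f := fun i p =>
    if D.eps i p.2 < C.phi i p.1 then (C.f i p.1).map (fun b => (b, p.2))
    else (D.f i p.2).map (fun b => (p.1, b))

end PreCrystal

/-- Kashiwara raising operator `ẽ_i` of type `A_n^{(1)}` on `(n+1)`-tuples of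
nonnegative integers (zero-indexed: coordinate `j` is `x_{j+1}`): defined iff the
coordinate at index `i` is positive, it adds 1 at index `i-1` (cyclically) and
subtracts 1 at index `i`. -/
def eA (n : ℕ) (i : Fin (n + 1)) (x : Fin (n + 1) → ℕ) : Option (Fin (n + 1) → ℕ) :=
  if 0 < x i then
    some (Function.update (Function.update x (i - 1) (x (i - 1) + 1)) i (x i - 1))
  else none

/-- Kashiwara lowering operator `f̃_i` of type `A_n^{(1)}`: defined iff the coordinate
at index `i-1` is positive, it subtracts 1 at index `i-1` and adds 1 at index `i`. -/
def fA (n : ℕ) (i : Fin (n + 1)) (x : Fin (n + 1) → ℕ) : Option (Fin (n + 1) → ℕ) :=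
  if 0 < x (i - 1) then
    some (Function.update (Function.update x i (x i + 1)) (i - 1) (x (i - 1) - 1))
  else none

/-- The crystal operators of type `A_n^{(1)}` on all `(n+1)`-tuples; the crystal `B_l`
is the subset of tuples with coordinate sum `l`. -/
def BA (n : ℕ) : PreCrystal n where
  carrier := Fin (n + 1) → ℕ
  e := eA n
  f := fA n

/-- The unique element of `{0, ..., n}` congruent to `-k` modulo `n+1`. -/
def negIdx (n : ℕ) (k : ℤ) : Fin (n + 1) :=
  ⟨((-k) % ((n : ℤ) + 1)).toNat, by
    have h1 := Int.emod_nonneg (-k) (by omega : ((n : ℤ) + 1) ≠ 0)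
    have h2 := Int.emod_lt_of_pos (-k) (by omega : (0 : ℤ) < (n : ℤ) + 1)
    omega⟩

/-- The cyclic shift `σ : (x_1, ..., x_{n+1}) ↦ (x_2, ..., x_{n+1}, x_1)`. -/
def shiftA (n : ℕ) (x : Fin (n + 1) → ℕ) : Fin (n + 1) → ℕ := fun j => x (j + 1)

/-- The map `t(x_1, ..., x_{n+1}) = (x_n, x_{n-1}, ..., x_1)`. -/
def tA (n : ℕ) (x : Fin (n + 1) → ℕ) : Fin n → ℕ :=
  fun k => x ⟨n - 1 - (k : ℕ), by omega⟩

/-- The `(N+1)`-fold tensor power `B ⊗ ... ⊗ B`, associated to the left. -/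
noncomputable def BPow (n : ℕ) : ℕ → PreCrystal n
  | 0 => BA n
  | N + 1 => (BPow n N).tensor (BA n)

/-- The element `b_1 ⊗ ... ⊗ b_{N+1}` of the `(N+1)`-fold tensor power. -/
noncomputable def tensorOf (n : ℕ) : (N : ℕ) → (Fin (N + 1) → (Fin (n + 1) → ℕ)) → (BPow n N).carrier
  | 0, b => b 0
  | N + 1, b => (tensorOf n N (fun j => b j.castSucc), b (Fin.last (N + 1)))

/-- Membership in `B_{l_1} ⊗ ... ⊗ B_{l_{N+1}}`: each factor has coordinate sum `l_j`. -/
def memBPow (n : ℕ) : (N : ℕ) → (Fin (N + 1) → ℕ) → (BPow n N).carrier → Prop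
  | 0, l, x => ∑ j, x j = l 0
  | N + 1, l, p => memBPow n N (fun j => l j.castSucc) p.1 ∧ ∑ j, p.2 j = l (Fin.last (N + 1))

/-- The componentwise cyclic shift `σ_B = σ ⊗ ... ⊗ σ` on a tensor power. -/
noncomputable def shiftPow (n : ℕ) : (N : ℕ) → (BPow n N).carrier → (BPow n N).carrier
  | 0, x => shiftA n x
  | N + 1, p => (shiftPow n N p.1, shiftA n p.2)


section AuxLemmas
variable {n : ℕ}

lemma sub_one_ne (hn : 1 ≤ n) (i : Fin (n + 1)) : i - 1 ≠ i := by
  intro h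
  have h1 : (1 : Fin (n + 1)) = 0 := sub_eq_self.mp h
  have h2 : ((1 : Fin (n + 1)) : ℕ) = 0 := by rw [h1]; rfl
  rw [Fin.val_one'] at h2
  have : 1 % (n + 1) = 1 := Nat.mod_eq_of_lt (by omega)
  omega

def moveE (i : Fin (n + 1)) (m : ℕ) (x : Fin (n + 1) → ℕ) : Fin (n + 1) → ℕ :=
  Function.update (Function.update x (i - 1) (x (i - 1) + m)) i (x i - m)

lemma moveE_i (i : Fin (n+1)) (m x) : moveE i m x i = x i - m := by simp [moveE]

lemma moveE_pred (hn : 1 ≤ n) (i : Fin (n+1)) (m x) : moveE i m x (i - 1) = x (i - 1) + m := by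
  simp [moveE, Function.update_apply, sub_one_ne hn i]

lemma moveE_other (i : Fin (n+1)) (m x) {j} (h1 : j ≠ i) (h2 : j ≠ i - 1) :
    moveE i m x j = x j := by
  simp [moveE, Function.update_apply, h1, h2]

lemma moveE_zero (hn : 1 ≤ n) (i : Fin (n+1)) (x) : moveE i 0 x = x := by
  funext j
  by_cases h1 : j = i
  · subst h1; simp [moveE_i]
  by_cases h2 : j = i - 1
  · subst h2; simp [moveE_pred hn]
  · exact moveE_other i 0 x h1 h2

lemma optIter_eA (hn : 1 ≤ n) (i : Fin (n+1)) :
    ∀ m x, m ≤ x i → OptIter (eA n i) m x = some (moveE i m x)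
  | 0, x, _ => by simp [OptIter, moveE_zero hn]
  | m + 1, x, h => by
    have hx : 0 < x i := by omega
    have he : eA n i x = some (moveE i 1 x) := by simp [eA, hx, moveE]
    have h1 : m ≤ moveE i 1 x i := by rw [moveE_i]; omega
    rw [OptIter, he, Option.bind_some, optIter_eA hn i m _ h1]
    congr 1
    funext j
    by_cases hj1 : j = i
    · subst hj1; rw [moveE_i, moveE_i, moveE_i]; omega
    by_cases hj2 : j = i - 1
    · subst hj2; rw [moveE_pred hn, moveE_pred hn, moveE_pred hn]; omega
    · rw [moveE_other i m _ hj1 hj2, moveE_other i 1 x hj1 hj2, moveE_other i (m+1) x hj1 hj2]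

lemma optIter_eA_none (hn : 1 ≤ n) (i : Fin (n+1)) :
    ∀ m x, x i < m → OptIter (eA n i) m x = none
  | m + 1, x, h => by
    by_cases hx : 0 < x i
    · have he : eA n i x = some (moveE i 1 x) := by simp [eA, hx, moveE]
      rw [OptIter, he, Option.bind_some]
      exact optIter_eA_none hn i m _ (by rw [moveE_i]; omega)
    · have he : eA n i x = none := by simp [eA, hx]
      rw [OptIter, he]; rfl

def moveF (i : Fin (n + 1)) (m : ℕ) (x : Fin (n + 1) → ℕ) : Fin (n + 1) → ℕ :=
  Function.update (Function.update x i (x i + m)) (i - 1) (x (i - 1) - m)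

lemma moveF_pred (i : Fin (n+1)) (m x) : moveF i m x (i - 1) = x (i - 1) - m := by simp [moveF]

lemma moveF_i (hn : 1 ≤ n) (i : Fin (n+1)) (m x) : moveF i m x i = x i + m := by
  simp [moveF, Function.update_apply, Ne.symm (sub_one_ne hn i)]

lemma moveF_other (i : Fin (n+1)) (m x) {j} (h1 : j ≠ i) (h2 : j ≠ i - 1) :
    moveF i m x j = x j := by
  simp [moveF, Function.update_apply, h1, h2]

lemma moveF_zero (hn : 1 ≤ n) (i : Fin (n+1)) (x) : moveF i 0 x = x := by
  funext j
  by_cases h1 : j = i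
  · subst h1; simp [moveF_i hn]
  by_cases h2 : j = i - 1
  · subst h2; simp [moveF_pred]
  · exact moveF_other i 0 x h1 h2

lemma optIter_fA (hn : 1 ≤ n) (i : Fin (n+1)) :
    ∀ m x, m ≤ x (i - 1) → OptIter (fA n i) m x = some (moveF i m x)
  | 0, x, _ => by simp [OptIter, moveF_zero hn]
  | m + 1, x, h => by
    have hx : 0 < x (i - 1) := by omega
    have he : fA n i x = some (moveF i 1 x) := by simp [fA, hx, moveF]
    have h1 : m ≤ moveF i 1 x (i - 1) := by rw [moveF_pred]; omega
    rw [OptIter, he, Option.bind_some, optIter_fA hn i m _ h1]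
    congr 1
    funext j
    by_cases hj1 : j = i
    · subst hj1; rw [moveF_i hn, moveF_i hn, moveF_i hn]; omega
    by_cases hj2 : j = i - 1
    · subst hj2; rw [moveF_pred, moveF_pred, moveF_pred]; omega
    · rw [moveF_other i m _ hj1 hj2, moveF_other i 1 x hj1 hj2, moveF_other i (m+1) x hj1 hj2]

lemma optIter_fA_none (hn : 1 ≤ n) (i : Fin (n+1)) :
    ∀ m x, x (i - 1) < m → OptIter (fA n i) m x = none
  | m + 1, x, h => by
    by_cases hx : 0 < x (i - 1)
    · have he : fA n i x = some (moveF i 1 x) := by simp [fA, hx, moveF]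
      rw [OptIter, he, Option.bind_some]
      exact optIter_fA_none hn i m _ (by rw [moveF_pred]; omega)
    · have he : fA n i x = none := by simp [fA, hx]
      rw [OptIter, he]; rfl

lemma eps_BA (hn : 1 ≤ n) (i : Fin (n+1)) (x : Fin (n+1) → ℕ) :
    (BA n).eps i x = x i := by
  show sSup {m | OptIter (eA n i) m x ≠ none} = x i
  have hset : {m | OptIter (eA n i) m x ≠ none} = Set.Iic (x i) := by
    ext m
    simp only [Set.mem_setOf_eq, Set.mem_Iic]
    constructor
    · intro h
      by_contra hm
      exact h (optIter_eA_none hn i m x (by omega))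
    · intro h
      rw [optIter_eA hn i m x h]; simp
  rw [hset, csSup_Iic]

lemma phi_BA (hn : 1 ≤ n) (i : Fin (n+1)) (x : Fin (n+1) → ℕ) :
    (BA n).phi i x = x (i - 1) := by
  show sSup {m | OptIter (fA n i) m x ≠ none} = x (i - 1)
  have hset : {m | OptIter (fA n i) m x ≠ none} = Set.Iic (x (i - 1)) := by
    ext m
    simp only [Set.mem_setOf_eq, Set.mem_Iic]
    constructor
    · intro h
      by_contra hm
      exact h (optIter_fA_none hn i m x (by omega))
    · intro h
      rw [optIter_fA hn i m x h]; simp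
  rw [hset, csSup_Iic]

lemma negIdx_val (n k : ℕ) (h1 : 1 ≤ k) (h2 : k ≤ n) :
    ((negIdx n (k : ℤ)) : ℕ) = n + 1 - k := by
  show ((-(k:ℤ)) % ((n:ℤ)+1)).toNat = n + 1 - k
  have e1 : ((n:ℤ)+1-k) % ((n:ℤ)+1) = (-(k:ℤ)) % ((n:ℤ)+1) := by
    rw [show ((n:ℤ)+1-k) = -(k:ℤ) + ((n:ℤ)+1)*1 by ring]
    exact Int.add_mul_emod_self_left _ _ _
  have e2 : ((n:ℤ)+1-k) % ((n:ℤ)+1) = (n:ℤ)+1-k :=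
    Int.emod_eq_of_lt (by omega) (by omega)
  omega

lemma negIdx_pred_val (n k : ℕ) (h1 : 1 ≤ k) (h2 : k ≤ n) :
    ((negIdx n (k : ℤ) - 1 : Fin (n+1)) : ℕ) = n - k := by
  rw [Fin.sub_def]
  have hv := negIdx_val n k h1 h2
  have hone : ((1 : Fin (n+1)) : ℕ) = 1 := by
    rw [Fin.val_one']; exact Nat.mod_eq_of_lt (by omega)
  simp only [hv, hone]
  rw [show n + 1 - 1 + (n + 1 - k) = (n - k) + (n + 1) by omega, Nat.add_mod_right]
  exact Nat.mod_eq_of_lt (by omega)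

def Scc (c : ℕ → ℕ) (k : ℕ) : ℕ := ∑ j ∈ Finset.Icc 1 k, c j

def Suu (n : ℕ) (u : Fin (n+1) → ℕ) (k : ℕ) : ℕ :=
  ∑ j : Fin (n+1), if n + 1 - k ≤ (j:ℕ) then u j else 0

lemma sum_ite_val (n v : ℕ) (hv : v ≤ n) (u : Fin (n+1) → ℕ) :
    ∑ j : Fin (n+1), (if (j:ℕ) = v then u j else 0) = u ⟨v, by omega⟩ := by
  have : ∀ j : Fin (n+1), (if (j:ℕ) = v then u j else 0)
      = (if j = ⟨v, by omega⟩ then u j else 0) := by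
    intro j
    congr 1
    simp [Fin.ext_iff]
  rw [Finset.sum_congr rfl (fun j _ => this j), Finset.sum_ite_eq' Finset.univ _ u]
  simp

lemma Suu_zero (n : ℕ) (u : Fin (n+1) → ℕ) : Suu n u 0 = 0 := by
  apply Finset.sum_eq_zero
  intro j _
  have := j.isLt
  rw [if_neg (by omega)]

lemma Suu_succ (n k : ℕ) (u : Fin (n+1) → ℕ) (h1 : 1 ≤ k) (h2 : k ≤ n) :
    Suu n u k = Suu n u (k-1) + u ⟨n+1-k, by omega⟩ := by
  have step : ∀ j : Fin (n+1), (if n + 1 - k ≤ (j:ℕ) then u j else 0)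
      = (if n + 1 - (k-1) ≤ (j:ℕ) then u j else 0) + (if (j:ℕ) = n+1-k then u j else 0) := by
    intro j
    have := j.isLt
    split_ifs <;> omega
  rw [Suu, Finset.sum_congr rfl (fun j _ => step j), Finset.sum_add_distrib,
    sum_ite_val n (n+1-k) (by omega) u]
  rfl

lemma Scc_zero (c : ℕ → ℕ) : Scc c 0 = 0 := by simp [Scc]

lemma Scc_succ (c : ℕ → ℕ) (k : ℕ) (h1 : 1 ≤ k) :
    Scc c k = Scc c (k-1) + c k := by
  have : k = (k-1) + 1 := by omega
  rw [this, Scc, Scc, Finset.sum_Icc_succ_top (by omega)]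
  congr 1 <;> omega

end AuxLemmas


section Wdefs
variable (n : ℕ) (u : Fin (n + 1) → ℕ) (c : ℕ → ℕ)

/-- Partial sums `mk = (u_{n+2-k}+⋯+u_{n+1}) - (c_1+⋯+c_k)`. -/
def mkk (k : ℕ) : ℕ := Suu n u k - Scc c k

/-- The explicit formula for the witness sequence `u^⟨k⟩`. -/
def Wt (k : ℕ) : Fin (n + 1) → ℕ := fun j =>
  if (j : ℕ) + k < n then u j
  else if (j : ℕ) + k = n then u j + mkk n u c k
  else c (n + 1 - (j : ℕ))

lemma mkk_zero : mkk n u c 0 = 0 := by simp [mkk, Suu_zero, Scc_zero]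

lemma Wt_lt (k : ℕ) (j : Fin (n + 1)) (h : (j : ℕ) + k < n) : Wt n u c k j = u j := by
  simp only [Wt]; rw [if_pos h]

lemma Wt_eq (k : ℕ) (j : Fin (n + 1)) (h : (j : ℕ) + k = n) :
    Wt n u c k j = u j + mkk n u c k := by
  simp only [Wt]; rw [if_neg (by omega), if_pos h]

lemma Wt_gt (k : ℕ) (j : Fin (n + 1)) (h : n < (j : ℕ) + k) :
    Wt n u c k j = c (n + 1 - (j : ℕ)) := by
  simp only [Wt]; rw [if_neg (by omega), if_neg (by omega)]

lemma Wt_zero : Wt n u c 0 = u := by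
  funext j
  have hj := j.isLt
  rcases Nat.lt_or_ge ((j : ℕ) + 0) n with h | h
  · exact Wt_lt n u c 0 j h
  · have h' : (j : ℕ) + 0 = n := by omega
    rw [Wt_eq n u c 0 j h', mkk_zero]
    rfl

end Wdefs

lemma Wt_step (n : ℕ) (hn : 1 ≤ n) (u : Fin (n + 1) → ℕ) (c : ℕ → ℕ)
    (k : ℕ) (h1 : 1 ≤ k) (h2 : k ≤ n)
    (hky : mkk n u c k + c k = u ⟨n + 1 - k, by omega⟩ + mkk n u c (k - 1)) :
    OptIter (eA n (negIdx n (k : ℤ)))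
      (Wt n u c (k - 1) (negIdx n (k : ℤ)) - c k) (Wt n u c (k - 1))
      = some (Wt n u c k) := by
  have hiv0 := negIdx_val n k h1 h2
  have hpv0 := negIdx_pred_val n k h1 h2
  generalize hgen : negIdx n (k : ℤ) = i at *
  have hiv : (i : ℕ) = n + 1 - k := hiv0
  have hpv : ((i - 1 : Fin (n + 1)) : ℕ) = n - k := hpv0
  have hui : u i = u ⟨n + 1 - k, by omega⟩ := congrArg u (Fin.ext hiv)
  have htop : Wt n u c (k - 1) i = u i + mkk n u c (k - 1) :=
    Wt_eq n u c (k - 1) i (by omega)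
  rw [htop]
  have hm : u i + mkk n u c (k - 1) - c k = mkk n u c k := by omega
  rw [hm, optIter_eA hn _ _ _ (by rw [htop]; omega)]
  congr 1
  funext j
  by_cases hj1 : j = i
  · subst hj1
    rw [moveE_i, htop, Wt_gt n u c k j (by omega)]
    rw [show n + 1 - (j : ℕ) = k by omega]
    omega
  by_cases hj2 : j = i - 1
  · subst hj2
    rw [moveE_pred hn, Wt_lt n u c (k - 1) (i - 1) (by omega),
      Wt_eq n u c k (i - 1) (by omega)]
  · rw [moveE_other _ _ _ hj1 hj2]
    have hne1 : (j : ℕ) ≠ (i : ℕ) := fun h => hj1 (Fin.ext h)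
    have hne2 : (j : ℕ) ≠ ((i - 1 : Fin (n + 1)) : ℕ) := fun h => hj2 (Fin.ext h)
    have hjlt := j.isLt
    simp only [Wt]
    split_ifs <;> omega

lemma Wt_phi (n : ℕ) (hn : 1 ≤ n) (u : Fin (n + 1) → ℕ) (c : ℕ → ℕ)
    (k : ℕ) (h1 : 1 ≤ k) (h2 : k ≤ n) :
    Wt n u c (k - 1) (negIdx n (k : ℤ) - 1) = u ⟨n - k, by omega⟩ := by
  have hpeq : negIdx n (k : ℤ) - 1 = ⟨n - k, by omega⟩ := Fin.ext (negIdx_pred_val n k h1 h2)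
  rw [hpeq, Wt_lt n u c (k - 1) ⟨n - k, by omega⟩ (by show n - k + (k - 1) < n; omega)]

lemma Wt_eps (n : ℕ) (hn : 1 ≤ n) (u : Fin (n + 1) → ℕ) (c : ℕ → ℕ)
    (k : ℕ) (h1 : 1 ≤ k) (h2 : k ≤ n) :
    Wt n u c k (negIdx n (k : ℤ)) = c k := by
  have hieq : negIdx n (k : ℤ) = ⟨n + 1 - k, by omega⟩ := Fin.ext (negIdx_val n k h1 h2)
  rw [hieq, Wt_gt n u c k ⟨n + 1 - k, by omega⟩ (by show n < n + 1 - k + k; omega)]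
  have hci : n + 1 - ((⟨n + 1 - k, by omega⟩ : Fin (n + 1)) : ℕ) = k := by
    show n + 1 - (n + 1 - k) = k; omega
  rw [hci]

lemma Wt_shift (n : ℕ) (hn : 1 ≤ n) (u : Fin (n + 1) → ℕ) (c : ℕ → ℕ)
    (k : ℕ) (h1 : 1 ≤ k) (h2 : k ≤ n) (hk : n - k < n + 1) :
    shiftA n (Wt n u c n) ⟨n - k, hk⟩ = c k := by
  have hadd : ((⟨n - k, hk⟩ : Fin (n + 1)) + 1) = (⟨n + 1 - k, by omega⟩ : Fin (n + 1)) := by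
    apply Fin.ext
    rw [Fin.val_add_one_of_lt (by rw [Fin.lt_def]; show n - k < n; omega)]
    show n - k + 1 = n + 1 - k
    omega
  show Wt n u c n ((⟨n - k, hk⟩ : Fin (n + 1)) + 1) = c k
  rw [hadd, Wt_gt n u c n ⟨n + 1 - k, by omega⟩ (by show n < n + 1 - k + n; omega)]
  have hci : n + 1 - ((⟨n + 1 - k, by omega⟩ : Fin (n + 1)) : ℕ) = k := by
    show n + 1 - (n + 1 - k) = k; omega
  rw [hci]

/-- Lemma 3.2 for type `A_n^{(1)}`: let `u ∈ B_M` and `c_1, …, c_n ≥ 0` with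
`u_{n+2-k} + ⋯ + u_{n+1} ≥ c_1 + ⋯ + c_k` for all `1 ≤ k ≤ n`.  Defining
`u^⟨0⟩ = u` and `u^⟨k⟩ = ẽ_{i_k}^{ε_{i_k}(u^⟨k-1⟩) - c_k} u^⟨k-1⟩`
(`i_k ≡ -k (mod n+1)`), all `u^⟨k⟩` are well defined (the witness sequence `w`),
and for `1 ≤ k ≤ n`: (i) `φ_{i_k}(u^⟨k-1⟩) = u_{n+1-k}`; (ii) `ε_{i_k}(u^⟨k⟩) = c_k`;
(iii) `t_k(σ u^⟨n⟩) = c_k`. -/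
theorem stmt11 (n M : ℕ) (hn : 1 ≤ n) (hM : 1 ≤ M) (u : Fin (n + 1) → ℕ)
    (hu : ∑ j, u j = M) (c : ℕ → ℕ)
    (hc : ∀ k, 1 ≤ k → k ≤ n →
      (∑ j ∈ Finset.Icc 1 k, c j)
        ≤ ∑ j : Fin (n + 1), if n + 1 - k ≤ (j : ℕ) then u j else 0) :
    ∃ w : ℕ → (Fin (n + 1) → ℕ),
      w 0 = u ∧
      (∀ k, 1 ≤ k → k ≤ n →
        OptIter ((BA n).e (negIdx n k))
          ((BA n).eps (negIdx n k) (w (k - 1)) - c k) (w (k - 1)) = some (w k)) ∧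
      (∀ k, 1 ≤ k → k ≤ n →
        (BA n).phi (negIdx n k) (w (k - 1)) = u ⟨n - k, by omega⟩ ∧
        (BA n).eps (negIdx n k) (w k) = c k ∧
        shiftA n (w n) ⟨n - k, by omega⟩ = c k) := by
  have hScSu : ∀ k, k ≤ n → Scc c k ≤ Suu n u k := by
    intro k hk
    rcases Nat.eq_zero_or_pos k with h0 | h1
    · subst h0; rw [Scc_zero, Suu_zero]
    · exact hc k h1 hk
  have hmkadd : ∀ k, k ≤ n → mkk n u c k + Scc c k = Suu n u k :=
    fun k hk => Nat.sub_add_cancel (hScSu k hk)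
  have hkey : ∀ k, ∀ _h1 : 1 ≤ k, ∀ _h2 : k ≤ n,
      mkk n u c k + c k = u ⟨n + 1 - k, by omega⟩ + mkk n u c (k - 1) := by
    intro k h1 h2
    have e1 := hmkadd k h2
    have e2 := hmkadd (k - 1) (by omega)
    have e3 := Suu_succ n k u h1 h2
    have e4 := Scc_succ c k h1
    omega
  refine ⟨Wt n u c, Wt_zero n u c, ?_, ?_⟩
  · intro k h1 h2
    show OptIter (eA n (negIdx n (k : ℤ)))
      ((BA n).eps (negIdx n (k : ℤ)) (Wt n u c (k - 1)) - c k) (Wt n u c (k - 1))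
      = some (Wt n u c k)
    rw [eps_BA hn]
    exact Wt_step n hn u c k h1 h2 (hkey k h1 h2)
  · intro k h1 h2
    refine ⟨?_, ?_, ?_⟩
    · rw [phi_BA hn]
      exact Wt_phi n hn u c k h1 h2
    · rw [eps_BA hn]
      exact Wt_eps n hn u c k h1 h2
    · exact Wt_shift n hn u c k h1 h2 (by omega)
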